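/- Let n ≥ 1, N ≥ 0, let f(x) = ∑_{|l|≤N} x^l p_l(x) where each p_l : ℝⁿ → ℂ is ℤⁿ-periodic, and let e_m be a standard basis vector of ℤⁿ. Then there exist ℤⁿ-periodic functions q_l : ℝⁿ → ℂ for |l| ≤ N+1 such that the function v(x) = ∑_{|l|≤N+1} x^l q_l(x) satisfies v(x+e_m) − v(x) = f(x) for all x ∈ ℝⁿ. -/

import Mathlib

open Complex BigOperators

/-- The finite set of multi-indices `l : Fin n → ℕ` with `|l| = ∑ i, l i ≤ N`. -/
def multiIdx (n N : ℕ) : Finset (Fin n → ℕ) :=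
  (Fintype.piFinset fun _ : Fin n => Finset.range (N + 1)).filter fun l => ∑ i, l i ≤ N

/-- A function on `ℝⁿ` is `ℤⁿ`-periodic. -/
def ZnPeriodic {n : ℕ} (p : (Fin n → ℝ) → ℂ) : Prop :=
  ∀ (x : Fin n → ℝ) (g : Fin n → ℤ), p (x + fun i => (g i : ℝ)) = p x

/-- The standard basis vector `e_m` of `ℤⁿ`, regarded as a point of `ℝⁿ`. -/
def stdBasisR {n : ℕ} (m : Fin n) : Fin n → ℝ := fun i => if i = m then 1 else 0

/-- For each `k` there is a polynomial `Q` of degree at most `k+1` with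
`Q(t+1) - Q(t) = t^k`. -/
lemma exists_poly (k : ℕ) : ∃ Q : Polynomial ℂ,
    Q.natDegree ≤ k + 1 ∧ ∀ t : ℂ, Q.eval (t + 1) - Q.eval t = t ^ k := by
  induction k using Nat.strong_induction_on with
  | _ k ih =>
    choose Q hdeg hQ using fun j : Fin k => ih j j.2
    refine ⟨Polynomial.C ((k + 1 : ℂ))⁻¹ *
      (Polynomial.X ^ (k + 1) -
        ∑ j : Fin k, Polynomial.C (((k + 1).choose j : ℕ) : ℂ) * Q j), ?_, ?_⟩
    · refine (Polynomial.natDegree_C_mul_le _ _).trans ?_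
      refine (Polynomial.natDegree_sub_le _ _).trans ?_
      refine max_le (by simp) ?_
      refine (Polynomial.natDegree_sum_le_of_forall_le _ _ fun j _ => ?_).trans
        (le_trans (le_refl (k+1)) le_rfl)
      refine (Polynomial.natDegree_C_mul_le _ _).trans ?_
      exact (hdeg j).trans (by omega)
    · intro t
      have hne : ((k : ℂ) + 1) ≠ 0 := Nat.cast_add_one_ne_zero k
      simp only [Polynomial.eval_mul, Polynomial.eval_C, Polynomial.eval_sub,
        Polynomial.eval_pow, Polynomial.eval_X, Polynomial.eval_finset_sum]
      have hS : (∑ j : Fin k, ((k + 1).choose j : ℂ) * (Q j).eval (t + 1)) -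
          (∑ j : Fin k, ((k + 1).choose j : ℂ) * (Q j).eval t) =
          ∑ j : Fin k, ((k + 1).choose j : ℂ) * t ^ (j : ℕ) := by
        rw [← Finset.sum_sub_distrib]
        exact Finset.sum_congr rfl fun j _ => by rw [← mul_sub, hQ j]
      have hb : (t + 1) ^ (k + 1) =
          (∑ j ∈ Finset.range k, t ^ j * ((k + 1).choose j : ℂ)) +
            ((k : ℂ) + 1) * t ^ k + t ^ (k + 1) := by
        rw [add_pow]
        simp only [one_pow, mul_one]
        rw [Finset.sum_range_succ, Finset.sum_range_succ]
        rw [Nat.choose_succ_self_right, Nat.choose_self]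
        push_cast
        ring
      have hS2 : (∑ j : Fin k, ((k + 1).choose j : ℂ) * t ^ (j : ℕ)) =
          ∑ j ∈ Finset.range k, t ^ j * ((k + 1).choose j : ℂ) := by
        rw [Fin.sum_univ_eq_sum_range (fun j => ((k + 1).choose j : ℂ) * t ^ j)]
        exact Finset.sum_congr rfl fun j _ => by ring
      have : ((k : ℂ) + 1)⁻¹ * ((t + 1) ^ (k + 1) -
            ∑ j : Fin k, ((k + 1).choose j : ℂ) * (Q j).eval (t + 1)) -
          ((k : ℂ) + 1)⁻¹ * (t ^ (k + 1) -
            ∑ j : Fin k, ((k + 1).choose j : ℂ) * (Q j).eval t) =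
          ((k : ℂ) + 1)⁻¹ * (((t + 1) ^ (k + 1) - t ^ (k + 1)) -
            (((∑ j : Fin k, ((k + 1).choose j : ℂ) * (Q j).eval (t + 1)) -
              (∑ j : Fin k, ((k + 1).choose j : ℂ) * (Q j).eval t)))) := by ring
      rw [this, hS, hS2, hb]
      field_simp
      ring

theorem exists_primitive_of_difference (n N : ℕ) (hn : 1 ≤ n)
    (p : (Fin n → ℕ) → (Fin n → ℝ) → ℂ) (hp : ∀ l, ZnPeriodic (p l))
    (f : (Fin n → ℝ) → ℂ)
    (hf : ∀ x, f x = ∑ l ∈ multiIdx n N, (∏ i, (x i : ℂ) ^ l i) * p l x)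
    (m : Fin n) :
    ∃ q : (Fin n → ℕ) → (Fin n → ℝ) → ℂ,
      (∀ l, ZnPeriodic (q l)) ∧
      ∀ x, (∑ l ∈ multiIdx n (N + 1),
              (∏ i, ((x + stdBasisR m) i : ℂ) ^ l i) * q l (x + stdBasisR m)) -
            (∑ l ∈ multiIdx n (N + 1), (∏ i, (x i : ℂ) ^ l i) * q l x) = f x := by
  classical
  obtain ⟨Qc, hdeg, hQ⟩ : ∃ Qc : ℕ → Polynomial ℂ,
      (∀ k, (Qc k).natDegree ≤ k + 1) ∧
      ∀ k (t : ℂ), (Qc k).eval (t + 1) - (Qc k).eval t = t ^ k := by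
    choose Qc h1 h2 using exists_poly
    exact ⟨Qc, h1, h2⟩
  set a : ℕ → ℕ → ℂ := fun k j => (Qc k).coeff j with ha
  -- membership in multiIdx is just the sum condition
  have mem_mi : ∀ {M : ℕ} {l : Fin n → ℕ}, l ∈ multiIdx n M ↔ ∑ i, l i ≤ M := by
    intro M l
    unfold multiIdx
    simp only [Finset.mem_filter, Fintype.mem_piFinset, Finset.mem_range]
    constructor
    · exact fun h => h.2
    · intro h
      refine ⟨fun i => ?_, h⟩
      have : l i ≤ ∑ j, l j :=
        Finset.single_le_sum (f := l) (fun _ _ => Nat.zero_le _) (Finset.mem_univ i)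
      omega
  have hsum_self : ∀ l : Fin n → ℕ, ∑ i, l i = l m + ∑ i ∈ ({m}ᶜ : Finset (Fin n)), l i :=
    fun l => Fintype.sum_eq_add_sum_compl m l
  have hsum_upd : ∀ (l : Fin n → ℕ) (k : ℕ),
      ∑ i, Function.update l m k i = k + ∑ i ∈ ({m}ᶜ : Finset (Fin n)), l i := by
    intro l k
    rw [Fintype.sum_eq_add_sum_compl m]
    congr 1
    · exact Function.update_self m k l
    · exact Finset.sum_congr rfl fun i hi =>
        Function.update_of_ne (by simpa using hi) _ _
  set q : (Fin n → ℕ) → (Fin n → ℝ) → ℂ := fun l' x =>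
    ∑ k ∈ Finset.range (N + 2),
      (if ∑ i, Function.update l' m k i ≤ N then a k (l' m) else 0) *
        p (Function.update l' m k) x with hq
  have hqper : ∀ l, ZnPeriodic (q l) := by
    intro l' x g
    refine Finset.sum_congr rfl fun k _ => ?_
    rw [hp]
  refine ⟨q, hqper, ?_⟩
  -- the key structural identity
  have key : ∀ y : Fin n → ℝ,
      (∑ l' ∈ multiIdx n (N + 1), (∏ i, (y i : ℂ) ^ l' i) * q l' y) =
      ∑ l ∈ multiIdx n N, (Qc (l m)).eval (y m : ℂ) *
        ((∏ i ∈ ({m}ᶜ : Finset (Fin n)), (y i : ℂ) ^ l i) * p l y) := by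
    intro y
    have L1 : (∑ l' ∈ multiIdx n (N + 1), (∏ i, (y i : ℂ) ^ l' i) * q l' y) =
        ∑ z ∈ (multiIdx n (N + 1)) ×ˢ Finset.range (N + 2),
          (∏ i, (y i : ℂ) ^ z.1 i) *
            ((if ∑ i, Function.update z.1 m z.2 i ≤ N then a z.2 (z.1 m) else 0) *
              p (Function.update z.1 m z.2) y) := by
      rw [Finset.sum_product]
      exact Finset.sum_congr rfl fun l' _ => by rw [hq, Finset.mul_sum]
    have R1 : (∑ l ∈ multiIdx n N, (Qc (l m)).eval (y m : ℂ) *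
          ((∏ i ∈ ({m}ᶜ : Finset (Fin n)), (y i : ℂ) ^ l i) * p l y)) =
        ∑ z ∈ (multiIdx n N) ×ˢ Finset.range (N + 2),
          (a (z.1 m) z.2 * (y m : ℂ) ^ z.2) *
            ((∏ i ∈ ({m}ᶜ : Finset (Fin n)), (y i : ℂ) ^ z.1 i) * p z.1 y) := by
      rw [Finset.sum_product]
      refine Finset.sum_congr rfl fun l hl => ?_
      have hlm : l m ≤ N := by
        have := mem_mi.mp hl
        have h2 := hsum_self l
        omega
      have : (Qc (l m)).eval ((y m : ℂ)) =
          ∑ j ∈ Finset.range (N + 2), a (l m) j * (y m : ℂ) ^ j :=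
        Polynomial.eval_eq_sum_range' (lt_of_le_of_lt (hdeg (l m)) (by omega)) _
      rw [this, Finset.sum_mul]
    rw [L1, R1]
    rw [← Finset.sum_filter_of_ne (s := (multiIdx n (N + 1)) ×ˢ Finset.range (N + 2))
      (p := fun z : (Fin n → ℕ) × ℕ =>
        (∑ i, Function.update z.1 m z.2 i ≤ N) ∧ z.1 m ≤ z.2 + 1)
      (by
        intro z hz hF
        constructor
        · by_contra h
          exact hF (by simp [h])
        · by_contra h
          push_neg at h
          have h0 : a z.2 (z.1 m) = 0 :=
            Polynomial.coeff_eq_zero_of_natDegree_lt (lt_of_le_of_lt (hdeg z.2) h)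
          exact hF (by rw [h0]; simp)),
      ← Finset.sum_filter_of_ne (s := (multiIdx n N) ×ˢ Finset.range (N + 2))
      (p := fun z : (Fin n → ℕ) × ℕ => z.2 ≤ z.1 m + 1)
      (by
        intro z hz hF
        by_contra h
        push_neg at h
        have h0 : a (z.1 m) z.2 = 0 :=
          Polynomial.coeff_eq_zero_of_natDegree_lt (lt_of_le_of_lt (hdeg (z.1 m)) h)
        exact hF (by rw [h0]; simp))]
    refine Finset.sum_nbij' (fun z => (Function.update z.1 m z.2, z.1 m))
      (fun z => (Function.update z.1 m z.2, z.1 m)) ?_ ?_ ?_ ?_ ?_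
    · rintro ⟨l', k⟩ hz
      simp only [Finset.mem_filter, Finset.mem_product, Finset.mem_range] at hz ⊢
      obtain ⟨⟨hl', hk⟩, hg, hle⟩ := hz
      have h1 := mem_mi.mp hl'
      have h2 := hsum_upd l' k
      have h3 := hsum_self l'
      refine ⟨⟨mem_mi.mpr (by omega), by omega⟩, ?_⟩
      simpa [Function.update_self] using hle
    · rintro ⟨l, j⟩ hz
      simp only [Finset.mem_filter, Finset.mem_product, Finset.mem_range] at hz ⊢
      obtain ⟨⟨hl, hj⟩, hle⟩ := hz
      have h1 := mem_mi.mp hl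
      have h2 := hsum_upd l j
      have h3 := hsum_self l
      have h4 : Function.update (Function.update l m j) m (l m) = l := by
        rw [Function.update_idem, Function.update_eq_self]
      refine ⟨⟨mem_mi.mpr (by omega), by omega⟩, ?_, ?_⟩
      · rw [h4]; omega
      · simpa [Function.update_self] using hle
    · rintro ⟨l', k⟩ hz
      simp only [Prod.mk.injEq]
      constructor
      · rw [Function.update_idem, Function.update_eq_self]
      · exact Function.update_self m k l'
    · rintro ⟨l, j⟩ hz
      simp only [Prod.mk.injEq]
      constructor
      · rw [Function.update_idem, Function.update_eq_self]
      · exact Function.update_self m j l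
    · rintro ⟨l', k⟩ hz
      simp only [Finset.mem_filter, Finset.mem_product, Finset.mem_range] at hz
      obtain ⟨⟨hl', hk⟩, hg, hle⟩ := hz
      rw [if_pos hg]
      have hprod : (∏ i, (y i : ℂ) ^ l' i) =
          (y m : ℂ) ^ l' m * ∏ i ∈ ({m}ᶜ : Finset (Fin n)), (y i : ℂ) ^ l' i :=
        Fintype.prod_eq_mul_prod_compl m _
      have hprod2 : (∏ i ∈ ({m}ᶜ : Finset (Fin n)), (y i : ℂ) ^
            (Function.update l' m k) i) =
          ∏ i ∈ ({m}ᶜ : Finset (Fin n)), (y i : ℂ) ^ l' i := by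
        refine Finset.prod_congr rfl fun i hi => ?_
        rw [Function.update_of_ne (by simpa using hi)]
      simp only [Function.update_self, hprod2]
      rw [hprod]
      ring
  -- assemble
  intro x
  have hxg : (x + fun i => (((if i = m then (1 : ℤ) else 0) : ℤ) : ℝ)) = x + stdBasisR m := by
    funext i
    simp [stdBasisR, apply_ite]
  have hpper : ∀ l : Fin n → ℕ, p l (x + stdBasisR m) = p l x := by
    intro l
    rw [← hxg, hp]
  rw [key, key, ← Finset.sum_sub_distrib, hf x]
  refine Finset.sum_congr rfl fun l hl => ?_
  have hprod : (∏ i ∈ ({m}ᶜ : Finset (Fin n)), (((x + stdBasisR m) i : ℝ) : ℂ) ^ l i) =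
      ∏ i ∈ ({m}ᶜ : Finset (Fin n)), (x i : ℂ) ^ l i := by
    refine Finset.prod_congr rfl fun i hi => ?_
    have him : i ≠ m := by simpa using hi
    simp [stdBasisR, him]
  have hym : (((x + stdBasisR m) m : ℝ) : ℂ) = (x m : ℂ) + 1 := by
    simp [stdBasisR]
  rw [hprod, hym, hpper, ← sub_mul, hQ (l m) (x m : ℂ)]
  rw [Fintype.prod_eq_mul_prod_compl m (fun i => (x i : ℂ) ^ l i)]
  ring
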